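/- arXiv:1111.6685 — 2 statements merged into one kernel-verified Lean document; each statement's English description precedes it below -/
import Mathlib

section
/- In a Hamming graph G = ∏_{i=1}^t K_{n_i} with constant threshold 2: if x_A and y_B are two 'subcubes' (sets of vertices agreeing with x on A, resp. with y on B) with minimum pairwise Hamming distance at least 3 between them, then the activation closure of x_A ∪ y_B equals x_A ∪ y_B itself. -/
/-
A vertex `v` outside a subcube `x_A` differs from `x` at some `i ∈ A`, so its only possible
neighbour in `x_A` is `v` with coordinate `i` reset to `x i`. A vertex outside `x_A ∪ y_B` with
two neighbours in the union therefore has one neighbour in each subcube, and these two are at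
Hamming distance at most 2. Hence `x_A ∪ y_B` is already closed under 2-activation.
-/

/-- The Hamming graph `∏ K_{n i}`: vertices are tuples, adjacent iff they differ
in exactly one coordinate (Hamming distance 1). -/
def hammingGraph {t : ℕ} (n : Fin t → ℕ) : SimpleGraph (Π i, Fin (n i)) where
  Adj x y := hammingDist x y = 1
  symm := ⟨fun x y h => by rwa [hammingDist_comm]⟩
  loopless := ⟨fun x h => by simp [hammingDist_self] at h⟩

/-- The "subcube" `x_A`: all vertices agreeing with `x` on every coordinate in `A`. -/
def subcube {t : ℕ} {n : Fin t → ℕ} (x : Π i, Fin (n i)) (A : Set (Fin t)) :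
    Set (Π i, Fin (n i)) :=
  {z | ∀ i ∈ A, z i = x i}

/-- A set `A` is closed under activation: every vertex with at least `θ v`
neighbors in `A` already belongs to `A`. -/
def activationClosed {V : Type*} [Fintype V] (G : SimpleGraph V) (θ : V → ℤ)
    (A : Set V) : Prop :=
  ∀ v : V, θ v ≤ ((A ∩ G.neighborSet v).ncard : ℤ) → v ∈ A

/-- The activation closure `[S]_θ`: the smallest activation-closed superset of `S`. -/
def activationClosure {V : Type*} [Fintype V] (G : SimpleGraph V) (θ : V → ℤ)
    (S : Set V) : Set V :=
  ⋂₀ {A : Set V | S ⊆ A ∧ activationClosed G θ A}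

theorem activationClosure_eq_self {V : Type*} [Fintype V] {G : SimpleGraph V} {θ : V → ℤ}
    {S : Set V} (h : activationClosed G θ S) : activationClosure G θ S = S :=
  (Set.sInter_subset_of_mem (show S ⊆ S ∧ activationClosed G θ S from ⟨subset_rfl, h⟩)).antisymm
    (Set.subset_sInter fun _ hA => hA.1)

theorem eq_update_of_hammingDist_eq_one {ι : Type*} [Fintype ι] [DecidableEq ι]
    {β : ι → Type*} [∀ i, DecidableEq (β i)] {v w : ∀ i, β i} (h : hammingDist v w = 1)
    {i : ι} (hi : v i ≠ w i) : w = Function.update v i (w i) := by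
  obtain ⟨a, ha⟩ := Finset.card_eq_one.mp h
  have mem_iff : ∀ j, v j ≠ w j ↔ j = a := fun j => by
    simpa using Finset.ext_iff.mp ha j
  funext j
  rcases eq_or_ne j i with rfl | hj
  · simp
  · rw [Function.update_of_ne hj]
    by_contra hne
    exact hj (((mem_iff j).mp (Ne.symm hne)).trans ((mem_iff i).mp hi).symm)

theorem ncard_subcube_inter_neighborSet_le_one {t : ℕ} {n : Fin t → ℕ}
    (x : Π i, Fin (n i)) {A : Set (Fin t)} {v : Π i, Fin (n i)} (hv : v ∉ subcube x A) :
    (subcube x A ∩ (hammingGraph n).neighborSet v).ncard ≤ 1 := by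
  simp only [subcube, Set.mem_ofPred_eq, not_forall] at hv
  obtain ⟨i, hiA, hvi⟩ := hv
  have eq_update : ∀ w ∈ subcube x A ∩ (hammingGraph n).neighborSet v,
      w = Function.update v i (x i) := by
    rintro w ⟨hwA, hvw⟩
    have hwi : w i = x i := hwA i hiA
    rw [← hwi]
    exact eq_update_of_hammingDist_eq_one hvw (hwi ▸ hvi)
  exact (Set.ncard_le_one (Set.toFinite _)).mpr fun u hu w hw =>
    (eq_update u hu).trans (eq_update w hw).symm

theorem activationClosed_union_subcubes {t : ℕ} {n : Fin t → ℕ} {x y : Π i, Fin (n i)}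
    {A B : Set (Fin t)}
    (hdist : ∀ u ∈ subcube x A, ∀ v ∈ subcube y B, 3 ≤ hammingDist u v) :
    activationClosed (hammingGraph n) (fun _ => 2) (subcube x A ∪ subcube y B) := by
  intro v hv
  simp only at hv
  by_contra hvAB
  rw [Set.mem_union, not_or] at hvAB
  set N := (hammingGraph n).neighborSet v
  have no_common_neighbour : subcube x A ∩ N = ∅ ∨ subcube y B ∩ N = ∅ := by
    by_contra! hne
    obtain ⟨⟨u, huA, huv⟩, ⟨w, hwB, hvw⟩⟩ := hne
    have huv' : hammingDist u v = 1 := (hammingGraph n).adj_symm huv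
    have hvw' : hammingDist v w = 1 := hvw
    have := hammingDist_triangle u v w
    have := hdist u huA w hwB
    omega
  rw [Set.union_inter_distrib_right] at hv
  have hle : ((subcube x A ∩ N) ∪ (subcube y B ∩ N)).ncard ≤ 1 := by
    rcases no_common_neighbour with h | h
    · rw [h, Set.empty_union]
      exact ncard_subcube_inter_neighborSet_le_one y hvAB.2
    · rw [h, Set.union_empty]
      exact ncard_subcube_inter_neighborSet_le_one x hvAB.1
  omega

theorem closure_subcubes_dist_three_general {t : ℕ} (n : Fin t → ℕ)
    (x y : Π i, Fin (n i)) (A B : Set (Fin t))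
    (hdist : ∀ u ∈ subcube x A, ∀ v ∈ subcube y B, 3 ≤ hammingDist u v) :
    activationClosure (hammingGraph n) (fun _ => (2 : ℤ))
      (subcube x A ∪ subcube y B) = subcube x A ∪ subcube y B :=
  activationClosure_eq_self (activationClosed_union_subcubes hdist)

theorem closure_subcubes_dist_three {t : ℕ} (n : Fin t → ℕ) (hn : ∀ i, 2 ≤ n i)
    (x y : Π i, Fin (n i)) (A B : Set (Fin t))
    (hdist : ∀ u ∈ subcube x A, ∀ v ∈ subcube y B, 3 ≤ hammingDist u v) :
    activationClosure (hammingGraph n) (fun _ => (2 : ℤ))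
      (subcube x A ∪ subcube y B) = subcube x A ∪ subcube y B :=
  closure_subcubes_dist_three_general n x y A B hdist
end

section
/- For the Hamming graph G = ∏_{i=1}^t K_{n_i} (each n_i ≥ 2, t ≥ 1) with all thresholds equal to 2, the minimum size of a target set whose activation closure is all of V(G) equals 1 + ⌈t/2⌉. -/
/-- `min-seed(G, θ)`: the minimum size of a target set influencing all of `G`. -/
noncomputable def minSeed {V : Type*} [Fintype V] (G : SimpleGraph V)
    (θ : V → ℤ) : ℕ :=
  sInf {m : ℕ | ∃ S : Set V, activationClosure G θ S = Set.univ ∧ S.ncard = m}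

/-!
Upper bound: seed a vertex `x` and, for each of `⌈t/2⌉` pairs of coordinates `{a, b}` covering
`Fin t`, the vertex obtained from `x` by changing coordinates `a` and `b`. Once the subcube through
`x` spanned by some coordinates is active, such a seed activates the subcube spanned by these
coordinates together with `a` and `b`.

Lower bound: the active set stays covered by subcubes whose total cost `∑ (dim + 2)` is at most
`2 |S|`. Activating a common neighbour `v` of two active vertices either keeps `v` inside their
common subcube or merges their two subcubes and `v` into one subcube with at most two more free
coordinates. A cover of the whole graph has cost at least `t + 2`, by counting points of `{0, 1}ᵗ`.
-/

open Function

section ActivationClosure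

variable {V : Type*} [Fintype V] {G : SimpleGraph V} {θ : V → ℤ}

lemma subset_activationClosure (S : Set V) : S ⊆ activationClosure G θ S :=
  fun _ hx _ hA => hA.1 hx

lemma activationClosure_subset {S A : Set V} (hS : S ⊆ A) (hA : activationClosed G θ A) :
    activationClosure G θ S ⊆ A :=
  Set.sInter_subset_of_mem ⟨hS, hA⟩

lemma activationClosed_activationClosure (S : Set V) :
    activationClosed G θ (activationClosure G θ S) := fun v hv A hA =>
  hA.2 v <| hv.trans <| by
    exact_mod_cast Set.ncard_le_ncard
      (Set.inter_subset_inter_left _ (Set.sInter_subset_of_mem hA)) (Set.toFinite _)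

lemma activationClosed.mem_of_adj {A : Set V} (hA : activationClosed G θ A) {u v w : V}
    (hθ : θ v ≤ 2) (hu : u ∈ A) (hw : w ∈ A) (huw : u ≠ w) (hvu : G.Adj v u)
    (hvw : G.Adj v w) : v ∈ A := by
  have hpair : ({u, w} : Set V) ⊆ A ∩ G.neighborSet v :=
    Set.insert_subset ⟨hu, hvu⟩ (Set.singleton_subset_iff.2 ⟨hw, hvw⟩)
  have hcard := Set.ncard_le_ncard hpair (Set.toFinite _)
  rw [Set.ncard_pair huw] at hcard
  exact hA v (hθ.trans (by exact_mod_cast hcard))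

/-- The closure lies in a maximal superset of `S` with property `P`, which is activation-closed. -/
lemma activationClosure_induction {P : Set V → Prop} {S : Set V}
    (hanti : ∀ A B, A ⊆ B → P B → P A) (hS : P S)
    (hstep : ∀ A v, P A → θ v ≤ ((A ∩ G.neighborSet v).ncard : ℤ) → P (insert v A)) :
    P (activationClosure G θ S) := by
  obtain ⟨A, ⟨hSA, hA⟩, hmax⟩ :=
    (Set.toFinite {A | S ⊆ A ∧ P A}).exists_maximal ⟨S, subset_rfl, hS⟩
  have hclosed : activationClosed G θ A := fun v hv =>
    hmax ⟨hSA.trans (Set.subset_insert v A), hstep A v hA hv⟩ (Set.subset_insert v A)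
      (Set.mem_insert v A)
  exact hanti _ _ (activationClosure_subset hSA hclosed) hA

end ActivationClosure

section Hamming

variable {ι : Type*} [Fintype ι] {β : ι → Type*} [∀ i, DecidableEq (β i)]

lemma exists_forall_ne_eq_of_hammingDist_eq_one {x y : ∀ i, β i} (h : hammingDist x y = 1) :
    ∃ i, ∀ k ≠ i, x k = y k := by
  obtain ⟨i, hi⟩ := Finset.card_eq_one.1 h
  refine ⟨i, fun k hk => of_not_not fun hne => hk ?_⟩
  have hk' : k ∈ ({k | x k ≠ y k} : Finset ι) := by simpa using hne
  rwa [hi, Finset.mem_singleton] at hk'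

lemma hammingDist_update_self [DecidableEq ι] {x : ∀ i, β i} {i : ι} {c : β i} (h : c ≠ x i) :
    hammingDist (update x i c) x = 1 := by
  rw [hammingDist, Finset.card_eq_one]
  refine ⟨i, Finset.ext fun k => ?_⟩
  rcases eq_or_ne k i with rfl | hk <;> simp [*]

lemma hammingDist_update_lt [DecidableEq ι] {x y : ∀ i, β i} {i : ι} (h : x i ≠ y i) :
    hammingDist (update x i (y i)) y < hammingDist x y := by
  refine Finset.card_lt_card ⟨fun k => ?_, fun hsub => ?_⟩
  · rcases eq_or_ne k i with rfl | hk <;> simp [*]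
  · have := hsub (by simpa using h)
    simp at this

end Hamming

lemma Set.ncard_le_prod_of_eq_of_notMem {ι : Type*} {β : ι → Type*} [∀ i, Finite (β i)]
    {s : Set (∀ i, β i)} (D : Finset ι) (h : ∀ x ∈ s, ∀ y ∈ s, ∀ i ∉ D, x i = y i) :
    s.ncard ≤ ∏ i ∈ D, Nat.card (β i) := by
  rw [← Nat.card_coe_set_eq, ← Finset.prod_coe_sort, ← Nat.card_pi]
  refine Nat.card_le_card_of_injective (fun x (i : D) => x.1 i) fun x y hxy =>
    Subtype.ext (funext fun i => ?_)
  by_cases hi : i ∈ D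
  · exact congrFun hxy ⟨i, hi⟩
  · exact h x x.2 y y.2 i hi

lemma Finset.sum_two_pow_le_two_pow_sum {α : Type*} {s : Finset α} {f : α → ℕ}
    (hs : s.Nonempty) (hf : ∀ a ∈ s, 1 ≤ f a) : ∑ a ∈ s, 2 ^ f a ≤ 2 ^ ∑ a ∈ s, f a := by
  induction hs using Finset.Nonempty.cons_induction with
  | singleton a => simp
  | cons a s ha hs ih =>
    have hfs : ∀ b ∈ s, 1 ≤ f b := fun b hb => hf b (Finset.mem_cons_of_mem hb)
    obtain ⟨b, hb⟩ := hs
    have h₁ : 2 ≤ 2 ^ f a :=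
      le_self_pow₀ one_le_two (Nat.one_le_iff_ne_zero.1 (hf a (Finset.mem_cons_self a s)))
    have h₂ : 2 ≤ 2 ^ ∑ b ∈ s, f b :=
      le_self_pow₀ one_le_two
        (Nat.one_le_iff_ne_zero.1 ((hfs b hb).trans (Finset.single_le_sum (by simp) hb)))
    rw [Finset.sum_cons, Finset.sum_cons, pow_add]
    exact (Nat.add_le_add_left (ih hfs) _).trans (Nat.add_le_mul h₁ h₂)

lemma Fin.exists_pairs_cover (t : ℕ) :
    ∃ a b : Fin ((t + 1) / 2) → Fin t, ∀ i, ∃ k, a k = i ∨ b k = i :=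
  ⟨fun k => ⟨2 * k, by omega⟩, fun k => ⟨min (2 * k + 1) (t - 1), by omega⟩,
    fun i => ⟨⟨i / 2, by omega⟩, by simp only [Fin.ext_iff]; omega⟩⟩

section HammingGraph

variable {t : ℕ} {n : Fin t → ℕ}

lemma hammingGraph_adj_update {z : Π i, Fin (n i)} {j : Fin t} {c : Fin (n j)} (h : c ≠ z j) :
    (hammingGraph n).Adj (update z j c) z :=
  hammingDist_update_self h

lemma mem_subcube_compl {x z : Π i, Fin (n i)} {D : Finset (Fin t)} :
    z ∈ subcube x (↑D)ᶜ ↔ ∀ i ∉ D, z i = x i := by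
  simp [subcube]

end HammingGraph

section LowerBound

variable {t : ℕ} {n : Fin t → ℕ}

/-- Subcubes are given by a base point and their set of free coordinates. -/
def subcubeUnion (C : Finset ((Π i, Fin (n i)) × Finset (Fin t))) : Set (Π i, Fin (n i)) :=
  ⋃ c ∈ C, subcube c.1 (↑c.2)ᶜ

/-- A seed is a subcube of cost `2`, and merging two subcubes through a common neighbour adds at
most two free coordinates, so activation never increases the cost of a cheapest cover. -/
def subcubeCost (C : Finset ((Π i, Fin (n i)) × Finset (Fin t))) : ℕ :=
  ∑ c ∈ C, (c.2.card + 2)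

lemma subcube_subset_subcube {x u v : Π i, Fin (n i)} {D F : Finset (Fin t)} {i : Fin t}
    (hu : u ∈ subcube x (↑D)ᶜ) (hv : ∀ k ≠ i, v k = u k) (hDF : D ⊆ F) (hi : i ∈ F) :
    subcube x (↑D)ᶜ ⊆ subcube v (↑F)ᶜ := by
  intro z hz
  rw [mem_subcube_compl] at hu hz ⊢
  intro k hk
  have hkD : k ∉ D := fun h => hk (hDF h)
  rw [hz k hkD, hv k (fun h => hk (h ▸ hi)), hu k hkD]

lemma mem_subcube_of_forall_ne_eq {x u v w : Π i, Fin (n i)} {D : Finset (Fin t)} {i j : Fin t}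
    (hu : u ∈ subcube x (↑D)ᶜ) (hw : w ∈ subcube x (↑D)ᶜ) (huw : u ≠ w)
    (hi : ∀ k ≠ i, v k = u k) (hj : ∀ k ≠ j, v k = w k) : v ∈ subcube x (↑D)ᶜ := by
  rw [mem_subcube_compl] at hu hw ⊢
  have hij : i ∈ D ∨ j ∈ D := by
    by_contra! hij
    refine huw (funext fun k => ?_)
    by_cases hki : k = i
    · rw [hki, hu i hij.1, hw i hij.1]
    by_cases hkj : k = j
    · rw [hkj, hu j hij.2, hw j hij.2]
    rw [← hi k hki, hj k hkj]
  rcases hij with hiD | hjD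
  · exact fun k hk => (hi k fun h => hk (h ▸ hiD)).trans (hu k hk)
  · exact fun k hk => (hj k fun h => hk (h ▸ hjD)).trans (hw k hk)

lemma subcubeCost_merge_le [DecidableEq (Π i, Fin (n i))]
    {C : Finset ((Π i, Fin (n i)) × Finset (Fin t))} {c d e : (Π i, Fin (n i)) × Finset (Fin t)}
    (hc : c ∈ C) (hd : d ∈ C) (hcd : c ≠ d) (he : e.2.card ≤ c.2.card + d.2.card + 2) :
    subcubeCost (insert e (C \ {c, d})) ≤ subcubeCost C := by
  have hins :
      subcubeCost (insert e (C \ {c, d})) ≤ (e.2.card + 2) + subcubeCost (C \ {c, d}) := by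
    by_cases heR : e ∈ C \ {c, d}
    · rw [subcubeCost, Finset.insert_eq_of_mem heR]
      exact Nat.le_add_left _ _
    · rw [subcubeCost, Finset.sum_insert heR, subcubeCost]
  have hsplit : subcubeCost C = (c.2.card + 2) + (d.2.card + 2) + subcubeCost (C \ {c, d}) := by
    have hsub : {c, d} ⊆ C := Finset.insert_subset hc (Finset.singleton_subset_iff.2 hd)
    rw [subcubeCost, subcubeCost, ← Finset.sum_sdiff hsub, Finset.sum_pair hcd, add_comm]
  omega

lemma exists_subcubeCost_le_of_adj {C : Finset ((Π i, Fin (n i)) × Finset (Fin t))}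
    {u v w : Π i, Fin (n i)} (hu : u ∈ subcubeUnion C) (hw : w ∈ subcubeUnion C) (huw : u ≠ w)
    (hvu : (hammingGraph n).Adj v u) (hvw : (hammingGraph n).Adj v w) :
    ∃ C', insert v (subcubeUnion C) ⊆ subcubeUnion C' ∧ subcubeCost C' ≤ subcubeCost C := by
  classical
  obtain ⟨i, hi⟩ := exists_forall_ne_eq_of_hammingDist_eq_one hvu
  obtain ⟨j, hj⟩ := exists_forall_ne_eq_of_hammingDist_eq_one hvw
  simp only [subcubeUnion, Set.mem_iUnion] at hu hw
  obtain ⟨c, hc, hu⟩ := hu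
  obtain ⟨d, hd, hw⟩ := hw
  by_cases hcd : c = d
  · subst hcd
    exact ⟨C, Set.insert_subset (Set.mem_biUnion hc (mem_subcube_of_forall_ne_eq hu hw huw hi hj))
      subset_rfl, le_rfl⟩
  set e := (v, c.2 ∪ d.2 ∪ {i, j})
  have hcover : subcubeUnion C ⊆ subcubeUnion (insert e (C \ {c, d})) := by
    intro z hz
    simp only [subcubeUnion, Set.mem_iUnion] at hz ⊢
    obtain ⟨b, hb, hz⟩ := hz
    by_cases hbc : b = c
    · subst hbc
      exact ⟨e, Finset.mem_insert_self _ _,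
        subcube_subset_subcube hu hi (by grind) (by simp [e]) hz⟩
    by_cases hbd : b = d
    · subst hbd
      exact ⟨e, Finset.mem_insert_self _ _,
        subcube_subset_subcube hw hj (by grind) (by simp [e]) hz⟩
    exact ⟨b, Finset.mem_insert_of_mem (by simp [hb, hbc, hbd]), hz⟩
  have hv : v ∈ subcubeUnion (insert e (C \ {c, d})) :=
    Set.mem_biUnion (Finset.mem_insert_self _ _) (mem_subcube_compl.2 fun _ _ => rfl)
  refine ⟨_, Set.insert_subset hv hcover, subcubeCost_merge_le hc hd hcd ?_⟩
  exact (Finset.card_union_le _ _).trans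
    (Nat.add_le_add (Finset.card_union_le _ _) Finset.card_le_two)

lemma add_two_le_subcubeCost (hn : ∀ i, 2 ≤ n i) {C : Finset ((Π i, Fin (n i)) × Finset (Fin t))}
    (hC : subcubeUnion C = Set.univ) : t + 2 ≤ subcubeCost C := by
  let e : (Fin t → Fin 2) → Π i, Fin (n i) := fun b i => Fin.castLE (hn i) (b i)
  have hpre : ∀ c ∈ C, (e ⁻¹' subcube c.1 (↑c.2)ᶜ).ncard ≤ 2 ^ c.2.card := fun c _ =>
    calc (e ⁻¹' subcube c.1 (↑c.2)ᶜ).ncard ≤ ∏ i ∈ c.2, Nat.card (Fin 2) :=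
          Set.ncard_le_prod_of_eq_of_notMem c.2 fun x hx y hy i hi =>
            Fin.castLE_injective (hn i)
              ((mem_subcube_compl.1 hx i hi).trans (mem_subcube_compl.1 hy i hi).symm)
      _ = 2 ^ c.2.card := by simp
  have hcube : 2 ^ t ≤ ∑ c ∈ C, 2 ^ c.2.card :=
    calc 2 ^ t = (Set.univ : Set (Fin t → Fin 2)).ncard := by simp [Set.ncard_univ]
      _ = (⋃ c ∈ C, e ⁻¹' subcube c.1 (↑c.2)ᶜ).ncard := by
        rw [← Set.preimage_iUnion₂, ← subcubeUnion, hC, Set.preimage_univ]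
      _ ≤ ∑ c ∈ C, (e ⁻¹' subcube c.1 (↑c.2)ᶜ).ncard := C.set_ncard_biUnion_le _
      _ ≤ ∑ c ∈ C, 2 ^ c.2.card := Finset.sum_le_sum hpre
  have hC : C.Nonempty := by
    rw [Finset.nonempty_iff_ne_empty]
    rintro rfl
    simp at hcube
  have hpow : 2 ^ (t + 2) ≤ 2 ^ subcubeCost C :=
    calc 2 ^ (t + 2) = 4 * 2 ^ t := by ring
      _ ≤ ∑ c ∈ C, 2 ^ (c.2.card + 2) := by
        simp only [pow_add, ← Finset.sum_mul]
        omega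
      _ ≤ 2 ^ subcubeCost C := Finset.sum_two_pow_le_two_pow_sum hC fun _ _ => by omega
  exact (Nat.pow_le_pow_iff_right (by norm_num)).1 hpow

lemma add_two_le_two_mul_ncard (hn : ∀ i, 2 ≤ n i) {S : Set (Π i, Fin (n i))}
    (hS : activationClosure (hammingGraph n) (fun _ => 2) S = Set.univ) :
    t + 2 ≤ 2 * S.ncard := by
  classical
  obtain ⟨C, hC, hcost⟩ : ∃ C, activationClosure (hammingGraph n) (fun _ => 2) S ⊆
      subcubeUnion C ∧ subcubeCost C ≤ 2 * S.ncard := by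
    refine activationClosure_induction
      (P := fun A => ∃ C, A ⊆ subcubeUnion C ∧ subcubeCost C ≤ 2 * S.ncard)
      (fun A B hAB ⟨C, hB, hC⟩ => ⟨C, hAB.trans hB, hC⟩)
      ⟨S.toFinset.image fun x => (x, ∅), fun x hx => ?_, ?_⟩ ?_
    · exact Set.mem_biUnion (Finset.mem_image_of_mem _ (Set.mem_toFinset.2 hx))
        (mem_subcube_compl.2 fun _ _ => rfl)
    · rw [subcubeCost, Finset.sum_image fun x _ y _ h => (Prod.ext_iff.1 h).1,
        Set.ncard_eq_toFinset_card']
      simp [mul_comm]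
    · rintro A v ⟨C, hAC, hcost⟩ hv
      obtain ⟨u, w, ⟨hu, hvu⟩, ⟨hw, hvw⟩, huw⟩ :=
        (Set.one_lt_ncard_iff (s := A ∩ (hammingGraph n).neighborSet v) (Set.toFinite _)).1
          (by omega)
      obtain ⟨C', hC', hcost'⟩ := exists_subcubeCost_le_of_adj (hAC hu) (hAC hw) huw hvu hvw
      exact ⟨C', (Set.insert_subset_insert hAC).trans hC', hcost'.trans hcost⟩
  rw [hS] at hC
  exact (add_two_le_subcubeCost hn (Set.univ_subset_iff.1 hC)).trans hcost

end LowerBound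

section UpperBound

variable {t : ℕ} {n : Fin t → ℕ} {X : Set (Π i, Fin (n i))}

lemma subcube_insert_subset (hX : activationClosed (hammingGraph n) (fun _ => 2) X)
    {x p : Π i, Fin (n i)} {D : Finset (Fin t)} {a : Fin t} (hD : subcube x (↑D)ᶜ ⊆ X)
    (hp : p ∈ X) (hpD : p ∈ subcube x (↑(insert a D))ᶜ) (hpa : p a ≠ x a) :
    subcube x (↑(insert a D))ᶜ ⊆ X := by
  rw [mem_subcube_compl] at hpD
  intro z hz
  induction h : hammingDist z p using Nat.strong_induction_on generalizing z with
  | _ k ih =>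
  rw [mem_subcube_compl] at hz
  have hbase : ∀ z' : Π i, Fin (n i), z' a = x a → (∀ i ∉ insert a D, z' i = x i) → z' ∈ X :=
    fun z' hz'a hz' => hD <| mem_subcube_compl.2 fun i hi => by
      rcases eq_or_ne i a with rfl | hia
      · exact hz'a
      · exact hz' i (by simp [hia, hi])
  by_cases hza : z a = x a
  · exact hbase z hza hz
  obtain rfl | hzp := eq_or_ne z p
  · exact hp
  obtain ⟨j, hj⟩ := Function.ne_iff.1 hzp
  have hz'a : update z j (p j) a ≠ x a := by
    rcases eq_or_ne a j with rfl | haj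
    · simpa using hpa
    · simpa [haj] using hza
  have hz' : update z j (p j) ∈ X := by
    refine ih _ (h ▸ hammingDist_update_lt hj) (mem_subcube_compl.2 fun i hi => ?_) rfl
    rcases eq_or_ne i j with rfl | hij
    · simpa using hpD i hi
    · simpa [hij] using hz i hi
  have hw : update z a (x a) ∈ X := hbase _ (by simp) fun i hi => by
    simpa [show i ≠ a by grind] using hz i hi
  refine hX.mem_of_adj le_rfl hz' hw (fun h => hz'a ?_) (hammingGraph_adj_update (Ne.symm hj)).symm
    (hammingGraph_adj_update (Ne.symm hza)).symm
  simpa using congrFun h a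

lemma subcube_union_pair_subset (hX : activationClosed (hammingGraph n) (fun _ => 2) X)
    {x : Π i, Fin (n i)} {D : Finset (Fin t)} {a b : Fin t} {α : Fin (n a)} {β : Fin (n b)}
    (hD : subcube x (↑D)ᶜ ⊆ X) (hα : α ≠ x a) (hβ : β ≠ x b)
    (hy : update (update x a α) b β ∈ X) :
    subcube x (↑({a, b} ∪ D))ᶜ ⊆ X := by
  have hx : x ∈ X := hD (mem_subcube_compl.2 fun _ _ => rfl)
  have hyD : update (update x a α) b β ∈ subcube x (↑(insert b (insert a D)))ᶜ :=
    mem_subcube_compl.2 fun i hi => by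
      simp only [Finset.mem_insert, not_or] at hi
      simp [hi.1, hi.2.1]
  have hline : subcube x (↑(insert a D))ᶜ ⊆ X := by
    obtain rfl | hab := eq_or_ne a b
    · rw [Finset.insert_idem] at hyD
      rw [update_idem] at hy hyD
      exact subcube_insert_subset hX hD hy hyD (by simpa using hβ)
    · have hp : update x a α ∈ X := by
        refine hX.mem_of_adj le_rfl hx hy (fun h => hβ ?_) (hammingGraph_adj_update hα)
          (hammingGraph_adj_update (by simpa [hab.symm] using hβ)).symm
        simpa using (congrFun h b).symm
      exact subcube_insert_subset hX hD hp
        (mem_subcube_compl.2 fun i hi => by simp [show i ≠ a by grind]) (by simpa using hα)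
  have hpair : ({a, b} ∪ D : Finset (Fin t)) = insert b (insert a D) := by grind
  rw [hpair]
  exact subcube_insert_subset hX hline hy hyD (by simpa using hβ)

lemma eq_univ_of_forall_update_update_mem
    (hX : activationClosed (hammingGraph n) (fun _ => 2) X) {κ : Type*} [Fintype κ]
    {x c : Π i, Fin (n i)} (hx : x ∈ X) (hc : ∀ i, c i ≠ x i) (a b : κ → Fin t)
    (hab : ∀ i, ∃ k, a k = i ∨ b k = i)
    (hy : ∀ k, update (update x (a k) (c (a k))) (b k) (c (b k)) ∈ X) : X = Set.univ := by
  classical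
  have hspan : ∀ s : Finset κ, subcube x (↑(s.biUnion fun k => {a k, b k}))ᶜ ⊆ X := by
    intro s
    induction s using Finset.induction_on with
    | empty =>
      intro z hz
      rwa [show z = x from funext fun i => mem_subcube_compl.1 hz i (by simp)]
    | insert k s _ ih =>
      rw [Finset.biUnion_insert]
      exact subcube_union_pair_subset hX ih (hc _) (hc _) (hy k)
  refine Set.eq_univ_of_forall fun z => hspan Finset.univ (mem_subcube_compl.2 fun i hi => ?_)
  obtain ⟨k, hk⟩ := hab i
  exact absurd (Finset.mem_biUnion.2 ⟨k, Finset.mem_univ k, by grind⟩) hi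

lemma exists_activationClosure_eq_univ_ncard_le (hn : ∀ i, 2 ≤ n i) :
    ∃ S : Set (Π i, Fin (n i)), activationClosure (hammingGraph n) (fun _ => 2) S = Set.univ ∧
      S.ncard ≤ 1 + (t + 1) / 2 := by
  choose x c hxc using fun i => (Fin.nontrivial_iff_two_le.2 (hn i)).exists_pair_ne
  obtain ⟨a, b, hab⟩ := Fin.exists_pairs_cover t
  let y k := update (update x (a k) (c (a k))) (b k) (c (b k))
  refine ⟨insert x (Set.range y), ?_, ?_⟩
  · exact eq_univ_of_forall_update_update_mem (activationClosed_activationClosure _)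
      (subset_activationClosure _ (Set.mem_insert _ _)) (fun i => (hxc i).symm) a b hab
      fun k => subset_activationClosure _ (Set.mem_insert_of_mem _ ⟨k, rfl⟩)
  · calc (insert x (Set.range y)).ncard ≤ (Set.range y).ncard + 1 := Set.ncard_insert_le _ _
      _ ≤ (Set.univ : Set (Fin ((t + 1) / 2))).ncard + 1 := by
        rw [← Set.image_univ]
        exact Nat.add_le_add_right (Set.ncard_image_le) 1
      _ = 1 + (t + 1) / 2 := by simp [Set.ncard_univ, add_comm]

end UpperBound

theorem minSeed_hammingGraph_general {t : ℕ} (n : Fin t → ℕ)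
    (hn : ∀ i, 2 ≤ n i) :
    minSeed (hammingGraph n) (fun _ => (2 : ℤ)) = 1 + (t + 1) / 2 := by
  obtain ⟨S, hS, hcard⟩ := exists_activationClosure_eq_univ_ncard_le hn
  rw [minSeed]
  refine le_antisymm ((Nat.sInf_le ?_).trans hcard) (le_csInf ⟨S.ncard, S, hS, rfl⟩ ?_)
  · exact ⟨S, hS, rfl⟩
  rintro m ⟨T, hT, rfl⟩
  have := add_two_le_two_mul_ncard hn hT
  omega

theorem minSeed_hammingGraph {t : ℕ} (ht : 1 ≤ t) (n : Fin t → ℕ)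
    (hn : ∀ i, 2 ≤ n i) :
    minSeed (hammingGraph n) (fun _ => (2 : ℤ)) = 1 + (t + 1) / 2 :=
  minSeed_hammingGraph_general n hn
end
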